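/- arXiv:2208.06078 — 5 statements merged into one kernel-verified Lean document; each statement's English description precedes it below -/
import Mathlib

section
/- Let L_{ρ,m} = ρ^{m+1}(m+1)^{10}/(m!)^2 with ρ₀/2 ≤ ρ ≤ ρ₀ ≤ 1. There exists C > 0 depending only on ρ₀ such that for all integers m ≥ 0 and 0 ≤ j ≤ ⌊m/2⌋: (m!/(j!(m-j)!)) · ((m+4)^{3/2}/ρ^{3/2}) · L_{ρ,m+3}/(L_{ρ,j+3} L_{ρ,m-j+3}) ≤ (C/(j+1)) · ((m-j+4)^{3/2}/ρ^{3/2}). -/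
open Nat in
lemma nat_comb (j n : ℕ) :
    (j+n)! * ((j+3)!)^2 * ((n+3)!)^2 ≤ (j+3)^6 * (j)! * (n)! * ((j+n+3)!)^2 := by
  have h1 : j ! * (n+3)! ≤ (j+n+3)! := by
    have := Nat.factorial_mul_factorial_dvd_factorial_add j (n+3)
    have := Nat.le_of_dvd (Nat.factorial_pos _) this
    simpa [show j + (n+3) = j+n+3 by omega] using this
  have e1 : (n+3)! = (n+1)*(n+2)*(n+3)*n ! := by
    simp [Nat.factorial_succ]; ring
  have e2 : (j+n+3)! = (j+n+1)*(j+n+2)*(j+n+3)*(j+n)! := by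
    simp [Nat.factorial_succ]; ring
  have e3 : (j+3)! = (j+1)*(j+2)*(j+3)*j ! := by
    simp [Nat.factorial_succ]; ring
  have h2 : (j+n)! * (n+3)! ≤ n ! * (j+n+3)! := by
    calc (j+n)! * (n+3)! = ((n+1)*(n+2)*(n+3))*((j+n)! * n !) := by rw [e1]; ring
      _ ≤ ((j+n+1)*(j+n+2)*(j+n+3))*((j+n)! * n !) := by gcongr <;> omega
      _ = n ! * (j+n+3)! := by rw [e2]; ring
  calc (j+n)! * ((j+3)!)^2 * ((n+3)!)^2
      = ((j+1)*(j+2)*(j+3))^2 * (((j+n)! * (n+3)!) * (j ! * (n+3)!)) * j ! := by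
        rw [e3]; ring
    _ ≤ ((j+3)^3)^2 * ((n ! * (j+n+3)!) * (j+n+3)!) * j ! := by
        have hb : (j+1)*(j+2)*(j+3) ≤ (j+3)^3 := by nlinarith
        gcongr
    _ = (j+3)^6 * j ! * n ! * ((j+n+3)!)^2 := by ring

lemma nat_pow10 (j : ℕ) : 4*(j+1)*(j+3)^6 ≤ (j+4)^10 := by
  have h1 : (j+3)^6 ≤ (j+4)^6 := Nat.pow_le_pow_left (by omega) 6
  have h2 : 4*(j+1) ≤ 64*(j+4) := by omega
  have h3 : 64*(j+4) ≤ (j+4)^4 := by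
    have : 4^3 ≤ (j+4)^3 := Nat.pow_le_pow_left (by omega) 3
    calc 64*(j+4) = 4^3*(j+4) := by norm_num
      _ ≤ (j+4)^3*(j+4) := by gcongr
      _ = (j+4)^4 := by ring
  calc 4*(j+1)*(j+3)^6 ≤ ((j+4)^4)*((j+4)^6) := Nat.mul_le_mul (h2.trans h3) h1
    _ = (j+4)^10 := by ring

/-- The Gevrey weight `L_{r,k} = r^{k+1}(k+1)^{10}/(k!)²`. -/
noncomputable def Lw (r : ℝ) (k : ℕ) : ℝ :=
  r ^ (k + 1) * ((k : ℝ) + 1) ^ 10 / ((Nat.factorial k : ℝ)) ^ 2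

lemma main_est (ρ₀ ρ : ℝ) (h0 : 0 < ρ₀) (hρl : ρ₀ / 2 ≤ ρ) (j n : ℕ) (hjn : j ≤ n) :
    ((Nat.factorial (j+n) : ℝ) / ((Nat.factorial j : ℝ) * (Nat.factorial n : ℝ))) *
        (((j : ℝ) + (n : ℝ) + 4) ^ ((3 : ℝ) / 2) / ρ ^ ((3 : ℝ) / 2)) *
        Lw ρ (j + n + 3) / (Lw ρ (j + 3) * Lw ρ (n + 3)) ≤
      ((2^14/ρ₀^4) / ((j : ℝ) + 1)) * (((n : ℝ) + 4) ^ ((3 : ℝ) / 2) / ρ ^ ((3 : ℝ) / 2)) := by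
  have hρ : 0 < ρ := lt_of_lt_of_le (by linarith) hρl
  have hfj : (0:ℝ) < (Nat.factorial j : ℝ) := by exact_mod_cast Nat.factorial_pos j
  have hfn : (0:ℝ) < (Nat.factorial n : ℝ) := by exact_mod_cast Nat.factorial_pos n
  have hfm : (0:ℝ) < (Nat.factorial (j+n+3) : ℝ) := by exact_mod_cast Nat.factorial_pos _
  have hfj3 : (0:ℝ) < (Nat.factorial (j+3) : ℝ) := by exact_mod_cast Nat.factorial_pos _
  have hfn3 : (0:ℝ) < (Nat.factorial (n+3) : ℝ) := by exact_mod_cast Nat.factorial_pos _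
  have hR : (0:ℝ) < ρ ^ ((3:ℝ)/2) := Real.rpow_pos_of_pos hρ _
  set Q : ℝ := ((Nat.factorial (j+n) : ℝ) * ((Nat.factorial (j+3) : ℝ))^2 *
      ((Nat.factorial (n+3) : ℝ))^2 * ((j:ℝ)+(n:ℝ)+4)^10) /
      ((Nat.factorial j : ℝ) * (Nat.factorial n : ℝ) * ((Nat.factorial (j+n+3) : ℝ))^2 *
      ((j:ℝ)+4)^10 * ((n:ℝ)+4)^10 * ρ^4) with hQdef
  have key : ((Nat.factorial (j+n) : ℝ) / ((Nat.factorial j : ℝ) * (Nat.factorial n : ℝ))) *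
        (((j : ℝ) + (n : ℝ) + 4) ^ ((3 : ℝ) / 2) / ρ ^ ((3 : ℝ) / 2)) *
        Lw ρ (j + n + 3) / (Lw ρ (j + 3) * Lw ρ (n + 3)) =
      Q * (((j : ℝ) + (n : ℝ) + 4) ^ ((3 : ℝ) / 2) / ρ ^ ((3 : ℝ) / 2)) := by
    rw [hQdef]
    unfold Lw
    push_cast
    field_simp
    ring
  rw [key]
  -- bound Q
  have hQle : Q ≤ (2^14/ρ₀^4) / (4*((j:ℝ)+1)) := by
    have hN : ((Nat.factorial (j+n) : ℝ) * ((Nat.factorial (j+3) : ℝ))^2 *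
        ((Nat.factorial (n+3) : ℝ))^2 * ((j:ℝ)+(n:ℝ)+4)^10) ≤
        (((j:ℝ)+3)^6 * (Nat.factorial j : ℝ) * (Nat.factorial n : ℝ) *
          ((Nat.factorial (j+n+3) : ℝ))^2) * (2^10 * ((n:ℝ)+4)^10) := by
      have hc : ((Nat.factorial (j+n) : ℝ) * ((Nat.factorial (j+3) : ℝ))^2 *
          ((Nat.factorial (n+3) : ℝ))^2) ≤
          ((j:ℝ)+3)^6 * (Nat.factorial j : ℝ) * (Nat.factorial n : ℝ) *
          ((Nat.factorial (j+n+3) : ℝ))^2 := by exact_mod_cast nat_comb j n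
      have hp : ((j:ℝ)+(n:ℝ)+4)^10 ≤ 2^10 * ((n:ℝ)+4)^10 := by
        have hb : (j:ℝ)+(n:ℝ)+4 ≤ 2*((n:ℝ)+4) := by
          have : (j:ℝ) ≤ (n:ℝ) := by exact_mod_cast hjn
          linarith
        calc ((j:ℝ)+(n:ℝ)+4)^10 ≤ (2*((n:ℝ)+4))^10 := by
              apply pow_le_pow_left₀ (by positivity) hb
          _ = 2^10 * ((n:ℝ)+4)^10 := by ring
      exact mul_le_mul hc hp (by positivity) (by positivity)
    have hD : ((Nat.factorial j : ℝ) * (Nat.factorial n : ℝ) * ((Nat.factorial (j+n+3) : ℝ))^2 *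
        ((j:ℝ)+4)^10 * ((n:ℝ)+4)^10) * (ρ₀^4/16) ≤
        ((Nat.factorial j : ℝ) * (Nat.factorial n : ℝ) * ((Nat.factorial (j+n+3) : ℝ))^2 *
        ((j:ℝ)+4)^10 * ((n:ℝ)+4)^10 * ρ^4) := by
      have : ρ₀^4/16 ≤ ρ^4 := by
        calc ρ₀^4/16 = (ρ₀/2)^4 := by ring
          _ ≤ ρ^4 := by apply pow_le_pow_left₀ (by positivity) hρl
      exact mul_le_mul_of_nonneg_left this (by positivity)
    have step1 : Q ≤ ((((j:ℝ)+3)^6 * (Nat.factorial j : ℝ) * (Nat.factorial n : ℝ) *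
          ((Nat.factorial (j+n+3) : ℝ))^2) * (2^10 * ((n:ℝ)+4)^10)) /
        (((Nat.factorial j : ℝ) * (Nat.factorial n : ℝ) * ((Nat.factorial (j+n+3) : ℝ))^2 *
          ((j:ℝ)+4)^10 * ((n:ℝ)+4)^10) * (ρ₀^4/16)) := by
      rw [hQdef]
      exact div_le_div₀ (by positivity) hN (by positivity) (by
        calc _ ≤ _ := hD
        )
    have step2 : ((((j:ℝ)+3)^6 * (Nat.factorial j : ℝ) * (Nat.factorial n : ℝ) *
          ((Nat.factorial (j+n+3) : ℝ))^2) * (2^10 * ((n:ℝ)+4)^10)) /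
        (((Nat.factorial j : ℝ) * (Nat.factorial n : ℝ) * ((Nat.factorial (j+n+3) : ℝ))^2 *
          ((j:ℝ)+4)^10 * ((n:ℝ)+4)^10) * (ρ₀^4/16)) =
        (2^14/ρ₀^4) * (((j:ℝ)+3)^6/((j:ℝ)+4)^10) := by
      field_simp
      ring
    have step3 : (((j:ℝ)+3)^6/((j:ℝ)+4)^10) ≤ 1/(4*((j:ℝ)+1)) := by
      rw [div_le_div_iff₀ (by positivity) (by positivity)]
      have := nat_pow10 j
      have hcast : (4:ℝ)*((j:ℝ)+1)*((j:ℝ)+3)^6 ≤ ((j:ℝ)+4)^10 := by exact_mod_cast this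
      linarith
    calc Q ≤ (2^14/ρ₀^4) * (((j:ℝ)+3)^6/((j:ℝ)+4)^10) := by rw [← step2]; exact step1
      _ ≤ (2^14/ρ₀^4) * (1/(4*((j:ℝ)+1))) := by
          apply mul_le_mul_of_nonneg_left step3 (by positivity)
      _ = (2^14/ρ₀^4) / (4*((j:ℝ)+1)) := by rw [mul_one_div]
  -- bound rpow factor
  have hA : ((j : ℝ) + (n : ℝ) + 4) ^ ((3 : ℝ) / 2) ≤ 4 * (((n : ℝ) + 4) ^ ((3 : ℝ) / 2)) := by
    have hb : (j:ℝ)+(n:ℝ)+4 ≤ 2*((n:ℝ)+4) := by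
      have : (j:ℝ) ≤ (n:ℝ) := by exact_mod_cast hjn
      linarith
    calc ((j : ℝ) + (n : ℝ) + 4) ^ ((3 : ℝ) / 2) ≤ (2*((n:ℝ)+4)) ^ ((3 : ℝ) / 2) := by
          apply Real.rpow_le_rpow (by positivity) hb (by norm_num)
      _ = (2:ℝ)^((3:ℝ)/2) * ((n:ℝ)+4)^((3:ℝ)/2) := by
          rw [Real.mul_rpow (by norm_num) (by positivity)]
      _ ≤ 4 * (((n : ℝ) + 4) ^ ((3 : ℝ) / 2)) := by
          have h2 : (2:ℝ)^((3:ℝ)/2) ≤ 4 := by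
            calc (2:ℝ)^((3:ℝ)/2) ≤ (2:ℝ)^(2:ℝ) :=
                  Real.rpow_le_rpow_of_exponent_le one_le_two (by norm_num)
              _ = 4 := by
                  rw [show (2:ℝ) = ((2:ℕ):ℝ) by norm_num, Real.rpow_natCast]; norm_num
          apply mul_le_mul_of_nonneg_right h2 (by positivity)
  have hQ0 : 0 ≤ Q := by rw [hQdef]; positivity
  calc Q * (((j : ℝ) + (n : ℝ) + 4) ^ ((3 : ℝ) / 2) / ρ ^ ((3 : ℝ) / 2))
      ≤ ((2^14/ρ₀^4) / (4*((j:ℝ)+1))) * ((4 * (((n : ℝ) + 4) ^ ((3 : ℝ) / 2))) / ρ ^ ((3 : ℝ) / 2)) := by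
        apply mul_le_mul hQle (by gcongr) (by positivity)
        positivity
    _ = ((2^14/ρ₀^4) / ((j : ℝ) + 1)) * (((n : ℝ) + 4) ^ ((3 : ℝ) / 2) / ρ ^ ((3 : ℝ) / 2)) := by
        have hj1 : ((j:ℝ)+1) ≠ 0 := by positivity
        field_simp

/-- Combinatorial weight estimate, low-frequency range 0 ≤ j ≤ ⌊m/2⌋. -/
theorem weight_estimate_low (ρ₀ : ℝ) (h0 : 0 < ρ₀) (h1 : ρ₀ ≤ 1) :
    ∃ C > 0, ∀ ρ : ℝ, ρ₀ / 2 ≤ ρ → ρ ≤ ρ₀ → ∀ m j : ℕ, j ≤ m / 2 →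
      ((Nat.factorial m : ℝ) / ((Nat.factorial j : ℝ) * (Nat.factorial (m - j) : ℝ))) *
          (((m : ℝ) + 4) ^ ((3 : ℝ) / 2) / ρ ^ ((3 : ℝ) / 2)) *
          Lw ρ (m + 3) / (Lw ρ (j + 3) * Lw ρ (m - j + 3)) ≤
        (C / ((j : ℝ) + 1)) * (((m : ℝ) - (j : ℝ) + 4) ^ ((3 : ℝ) / 2) / ρ ^ ((3 : ℝ) / 2)) := by
  refine ⟨2^14/ρ₀^4, by positivity, ?_⟩
  intro ρ hρl hρu m j hj
  obtain ⟨n, rfl⟩ : ∃ n, m = j + n := ⟨m - j, by omega⟩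
  have hjn : j ≤ n := by omega
  have hsub : j + n - j = n := by omega
  rw [hsub]
  rw [show ((j+n:ℕ):ℝ) - (j:ℝ) = (n:ℝ) by push_cast; ring]
  rw [show ((j+n:ℕ):ℝ) + 4 = (j:ℝ) + (n:ℝ) + 4 by push_cast; ring]
  exact main_est ρ₀ ρ h0 hρl j n hjn
end

section
/- Let L_{ρ,m} = ρ^{m+1}(m+1)^{10}/(m!)^2 with ρ₀/2 ≤ ρ ≤ ρ₀ ≤ 1. There exists C > 0 depending only on ρ₀ such that for all integers m ≥ 0 and ⌊m/2⌋ + 1 ≤ j ≤ m: (m!/(j!(m-j)!)) · ((m+4)^{3/2}/ρ^{3/2}) · L_{ρ,m+3}/(L_{ρ,j+1} L_{ρ,m-j+5}) ≤ C/(m-j+1). -/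
lemma Lw_pos {r : ℝ} (hr : 0 < r) (k : ℕ) : 0 < Lw r k := by
  unfold Lw
  apply div_pos
  · positivity
  · exact pow_pos (by exact_mod_cast k.factorial_pos) 2

set_option maxHeartbeats 1600000 in
/-- Combinatorial weight estimate, high-frequency range ⌊m/2⌋+1 ≤ j ≤ m. -/
theorem weight_estimate_high (ρ₀ : ℝ) (h0 : 0 < ρ₀) (h1 : ρ₀ ≤ 1) :
    ∃ C > 0, ∀ ρ : ℝ, ρ₀ / 2 ≤ ρ → ρ ≤ ρ₀ → ∀ m j : ℕ, m / 2 + 1 ≤ j → j ≤ m →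
      ((Nat.factorial m : ℝ) / ((Nat.factorial j : ℝ) * (Nat.factorial (m - j) : ℝ))) *
          (((m : ℝ) + 4) ^ ((3 : ℝ) / 2) / ρ ^ ((3 : ℝ) / 2)) *
          Lw ρ (m + 3) / (Lw ρ (j + 1) * Lw ρ (m - j + 5)) ≤
        C / ((m : ℝ) - (j : ℝ) + 1) := by
  refine ⟨2 ^ 13 * (2 / ρ₀) ^ 6, by positivity, ?_⟩
  intro ρ hρl hρu m j hj2 hjm
  obtain ⟨n, rfl⟩ := Nat.exists_eq_add_of_le hjm
  have hnj : n ≤ j := by omega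
  have hρ : 0 < ρ := by linarith
  have hρ1 : ρ ≤ 1 := le_trans hρu h1
  have hN : (0:ℝ) ≤ (n:ℝ) := Nat.cast_nonneg n
  have hJ : (0:ℝ) ≤ (j:ℝ) := Nat.cast_nonneg j
  have hN1 : (0:ℝ) < (n:ℝ) + 1 := by linarith
  simp only [Nat.add_sub_cancel_left]
  rw [show ((j + n : ℕ):ℝ) - (j:ℝ) + 1 = (n:ℝ) + 1 by push_cast; ring]
  -- abbreviations
  have hfne : ∀ k : ℕ, ((Nat.factorial k : ℕ):ℝ) ≠ 0 := fun k => by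
    exact_mod_cast k.factorial_pos.ne'
  have hfpos : ∀ k : ℕ, (0:ℝ) < ((Nat.factorial k : ℕ):ℝ) := fun k => by
    exact_mod_cast k.factorial_pos
  have hBpos : (0:ℝ) < ρ ^ ((3:ℝ)/2) := Real.rpow_pos_of_pos hρ _
  have hApos : (0:ℝ) < ((j:ℝ) + (n:ℝ) + 4) ^ ((3:ℝ)/2) :=
    Real.rpow_pos_of_pos (by linarith) _
  have hDen : (0:ℝ) <
      ((Nat.factorial j : ℕ):ℝ) * ((Nat.factorial n : ℕ):ℝ) * (ρ ^ ((3:ℝ)/2)) *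
        (((Nat.factorial (j + n + 3) : ℕ):ℝ)) ^ 2 *
        (ρ ^ (j + 2) * ((j:ℝ) + 2) ^ 10) * (ρ ^ (n + 6) * ((n:ℝ) + 6) ^ 10) := by
    have := hfpos j; have := hfpos n; have := hfpos (j + n + 3)
    positivity
  have hE :
      ((Nat.factorial (j + n) : ℝ) / ((Nat.factorial j : ℝ) * (Nat.factorial n : ℝ))) *
          ((((j + n : ℕ) : ℝ) + 4) ^ ((3 : ℝ) / 2) / ρ ^ ((3 : ℝ) / 2)) *
          Lw ρ (j + n + 3) / (Lw ρ (j + 1) * Lw ρ (n + 5)) =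
        (((Nat.factorial (j + n) : ℕ):ℝ) * (((j:ℝ) + (n:ℝ) + 4) ^ ((3:ℝ)/2)) *
            (ρ ^ (j + n + 4) * ((j:ℝ) + (n:ℝ) + 4) ^ 10) *
            (((Nat.factorial (j + 1) : ℕ):ℝ)) ^ 2 * (((Nat.factorial (n + 5) : ℕ):ℝ)) ^ 2) /
          (((Nat.factorial j : ℕ):ℝ) * ((Nat.factorial n : ℕ):ℝ) * (ρ ^ ((3:ℝ)/2)) *
            (((Nat.factorial (j + n + 3) : ℕ):ℝ)) ^ 2 *
            (ρ ^ (j + 2) * ((j:ℝ) + 2) ^ 10) * (ρ ^ (n + 6) * ((n:ℝ) + 6) ^ 10)) := by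
    unfold Lw
    have h1 := hfne j; have h2 := hfne n; have h3 := hfne (j + n + 3)
    have h4 := hfne (j + 1); have h5 := hfne (n + 5); have h6 := hfne (j + n)
    push_cast
    field_simp
    ring
  rw [hE, div_le_div_iff₀ hDen hN1]
  -- factorial expansions
  have e3 : j + n + 3 = (j + n + 2) + 1 := by omega
  have e2 : j + n + 2 = (j + n + 1) + 1 := by omega
  have hF3 : ((Nat.factorial (j + n + 3) : ℕ):ℝ) =
      ((j:ℝ) + (n:ℝ) + 1) * ((j:ℝ) + (n:ℝ) + 2) * ((j:ℝ) + (n:ℝ) + 3) *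
        ((Nat.factorial (j + n) : ℕ):ℝ) := by
    rw [e3, Nat.factorial_succ, e2, Nat.factorial_succ, Nat.factorial_succ]
    push_cast; ring
  have hFj : ((Nat.factorial (j + 1) : ℕ):ℝ) = ((j:ℝ) + 1) * ((Nat.factorial j : ℕ):ℝ) := by
    rw [Nat.factorial_succ]; push_cast; ring
  have en5 : n + 5 = (n + 4) + 1 := by omega
  have en4 : n + 4 = (n + 3) + 1 := by omega
  have en3 : n + 3 = (n + 2) + 1 := by omega
  have en2 : n + 2 = (n + 1) + 1 := by omega
  have hFn : ((Nat.factorial (n + 5) : ℕ):ℝ) =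
      ((n:ℝ) + 1) * ((n:ℝ) + 2) * ((n:ℝ) + 3) * ((n:ℝ) + 4) * ((n:ℝ) + 5) *
        ((Nat.factorial n : ℕ):ℝ) := by
    rw [en5, Nat.factorial_succ, en4, Nat.factorial_succ, en3, Nat.factorial_succ,
      en2, Nat.factorial_succ, Nat.factorial_succ]
    push_cast; ring
  rw [hF3, hFj, hFn]
  -- component inequalities
  have hp1 : ((Nat.factorial j : ℕ):ℝ) * ((Nat.factorial n : ℕ):ℝ) ≤
      ((Nat.factorial (j + n) : ℕ):ℝ) := by
    have h := Nat.choose_mul_factorial_mul_factorial (Nat.le_add_right j n)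
    rw [Nat.add_sub_cancel_left] at h
    have hc : 1 ≤ (j + n).choose j := Nat.choose_pos (Nat.le_add_right j n)
    have : Nat.factorial j * Nat.factorial n ≤ Nat.factorial (j + n) := by
      calc Nat.factorial j * Nat.factorial n
          ≤ (j + n).choose j * (Nat.factorial j * Nat.factorial n) :=
            Nat.le_mul_of_pos_left _ hc
        _ = Nat.factorial (j + n) := by rw [← h]; ring
    exact_mod_cast this
  have hx1 : (1:ℝ) ≤ (j:ℝ) + (n:ℝ) + 4 := by linarith
  have h32 : ((j:ℝ) + (n:ℝ) + 4) ^ ((3:ℝ)/2) ≤ ((j:ℝ) + (n:ℝ) + 4) ^ (2:ℕ) := by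
    rw [← Real.rpow_natCast ((j:ℝ) + (n:ℝ) + 4) 2]
    exact Real.rpow_le_rpow_of_exponent_le hx1 (by norm_num)
  have hp2 : ((j:ℝ) + (n:ℝ) + 4) ^ ((3:ℝ)/2) * ((n:ℝ) + 1) * ((j:ℝ) + 1) ^ 2 ≤
      8 * (((j:ℝ) + (n:ℝ) + 1) * ((j:ℝ) + (n:ℝ) + 2) * ((j:ℝ) + (n:ℝ) + 3)) ^ 2 := by
    calc ((j:ℝ) + (n:ℝ) + 4) ^ ((3:ℝ)/2) * ((n:ℝ) + 1) * ((j:ℝ) + 1) ^ 2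
        ≤ ((j:ℝ) + (n:ℝ) + 4) ^ (2:ℕ) * ((n:ℝ) + 1) * ((j:ℝ) + 1) ^ 2 := by
          gcongr
      _ ≤ (2 * ((j:ℝ) + (n:ℝ) + 2)) ^ (2:ℕ) * (((j:ℝ) + (n:ℝ) + 3) ^ 2) *
            (((j:ℝ) + (n:ℝ) + 1)) ^ 2 := by
          gcongr
          · linarith
          · nlinarith
          · linarith
      _ = 4 * (((j:ℝ) + (n:ℝ) + 1) * ((j:ℝ) + (n:ℝ) + 2) * ((j:ℝ) + (n:ℝ) + 3)) ^ 2 := by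
          ring
      _ ≤ 8 * (((j:ℝ) + (n:ℝ) + 1) * ((j:ℝ) + (n:ℝ) + 2) * ((j:ℝ) + (n:ℝ) + 3)) ^ 2 := by
          have hS : (0:ℝ) ≤ (((j:ℝ) + (n:ℝ) + 1) * ((j:ℝ) + (n:ℝ) + 2) * ((j:ℝ) + (n:ℝ) + 3)) ^ 2 := by
            positivity
          linarith
  have hρ2 : ρ ^ (2:ℕ) ≤ ρ ^ ((3:ℝ)/2) := by
    rw [← Real.rpow_natCast ρ 2]
    exact Real.rpow_le_rpow_of_exponent_ge hρ hρ1 (by norm_num)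
  have hp3 : (1:ℝ) ≤ (2 / ρ₀) ^ 6 * (ρ ^ ((3:ℝ)/2) * ρ ^ 4) := by
    have h6 : (ρ₀ / 2) ^ 6 ≤ ρ ^ ((3:ℝ)/2) * ρ ^ 4 := by
      calc (ρ₀ / 2) ^ 6 ≤ ρ ^ 6 := by
            exact pow_le_pow_left₀ (by positivity) hρl 6
        _ = ρ ^ (2:ℕ) * ρ ^ 4 := by ring
        _ ≤ ρ ^ ((3:ℝ)/2) * ρ ^ 4 := by gcongr
    calc (1:ℝ) = (2 / ρ₀) ^ 6 * (ρ₀ / 2) ^ 6 := by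
          field_simp
      _ ≤ (2 / ρ₀) ^ 6 * (ρ ^ ((3:ℝ)/2) * ρ ^ 4) := by gcongr
  have hp4 : ((j:ℝ) + (n:ℝ) + 4) ^ 10 ≤ 2 ^ 10 * ((j:ℝ) + 2) ^ 10 := by
    have hNJ : (n:ℝ) ≤ (j:ℝ) := by exact_mod_cast hnj
    calc ((j:ℝ) + (n:ℝ) + 4) ^ 10 ≤ (2 * ((j:ℝ) + 2)) ^ 10 := by
          apply pow_le_pow_left₀ (by linarith) (by linarith)
      _ = 2 ^ 10 * ((j:ℝ) + 2) ^ 10 := by ring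
  have hp5 : (((n:ℝ) + 1) * ((n:ℝ) + 2) * ((n:ℝ) + 3) * ((n:ℝ) + 4) * ((n:ℝ) + 5)) ^ 2 ≤
      ((n:ℝ) + 6) ^ 10 := by
    have h5 : ((n:ℝ) + 1) * ((n:ℝ) + 2) * ((n:ℝ) + 3) * ((n:ℝ) + 4) * ((n:ℝ) + 5) ≤
        ((n:ℝ) + 6) ^ 5 := by
      calc ((n:ℝ) + 1) * ((n:ℝ) + 2) * ((n:ℝ) + 3) * ((n:ℝ) + 4) * ((n:ℝ) + 5)
          ≤ ((n:ℝ) + 6) * ((n:ℝ) + 6) * ((n:ℝ) + 6) * ((n:ℝ) + 6) * ((n:ℝ) + 6) := by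
            gcongr <;> linarith
        _ = ((n:ℝ) + 6) ^ 5 := by ring
    calc (((n:ℝ) + 1) * ((n:ℝ) + 2) * ((n:ℝ) + 3) * ((n:ℝ) + 4) * ((n:ℝ) + 5)) ^ 2
        ≤ (((n:ℝ) + 6) ^ 5) ^ 2 := by
          apply pow_le_pow_left₀ (by positivity) h5
      _ = ((n:ℝ) + 6) ^ 10 := by ring
  -- assemble
  set F := ((Nat.factorial (j + n) : ℕ):ℝ) with hF
  set FJ := ((Nat.factorial j : ℕ):ℝ) with hFJ
  set FN := ((Nat.factorial n : ℕ):ℝ) with hFN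
  have hFpos := hfpos (j + n)
  have hFJpos := hfpos j
  have hFNpos := hfpos n
  calc F * (((j:ℝ) + (n:ℝ) + 4) ^ ((3:ℝ)/2)) * (ρ ^ (j + n + 4) * ((j:ℝ) + (n:ℝ) + 4) ^ 10) *
        (((j:ℝ) + 1) * FJ) ^ 2 *
        (((n:ℝ) + 1) * ((n:ℝ) + 2) * ((n:ℝ) + 3) * ((n:ℝ) + 4) * ((n:ℝ) + 5) * FN) ^ 2 *
        ((n:ℝ) + 1)
      = (FJ * FN) * (((j:ℝ) + (n:ℝ) + 4) ^ ((3:ℝ)/2) * ((n:ℝ) + 1) * ((j:ℝ) + 1) ^ 2) *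
          (ρ ^ (j + n + 4) * 1) * (((j:ℝ) + (n:ℝ) + 4) ^ 10) *
          ((((n:ℝ) + 1) * ((n:ℝ) + 2) * ((n:ℝ) + 3) * ((n:ℝ) + 4) * ((n:ℝ) + 5)) ^ 2) *
          ((FJ * FN) * F) := by ring
    _ ≤ F * (8 * (((j:ℝ) + (n:ℝ) + 1) * ((j:ℝ) + (n:ℝ) + 2) * ((j:ℝ) + (n:ℝ) + 3)) ^ 2) *
          (ρ ^ (j + n + 4) * ((2 / ρ₀) ^ 6 * (ρ ^ ((3:ℝ)/2) * ρ ^ 4))) *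
          (2 ^ 10 * ((j:ℝ) + 2) ^ 10) * (((n:ℝ) + 6) ^ 10) * ((FJ * FN) * F) := by
        gcongr
    _ = 2 ^ 13 * (2 / ρ₀) ^ 6 *
          (FJ * FN * ρ ^ ((3:ℝ)/2) *
            (((j:ℝ) + (n:ℝ) + 1) * ((j:ℝ) + (n:ℝ) + 2) * ((j:ℝ) + (n:ℝ) + 3) * F) ^ 2 *
            (ρ ^ (j + 2) * ((j:ℝ) + 2) ^ 10) * (ρ ^ (n + 6) * ((n:ℝ) + 6) ^ 10)) := by
        ring
end

section
/- Let L_{ρ,m} = ρ^{m+1}(m+1)^{10}/(m!)^2 with ρ₀/2 ≤ ρ ≤ ρ₀ ≤ 1. There exists C > 0 depending only on ρ₀ such that for all integers m ≥ 0 and 0 ≤ j ≤ ⌊m/2⌋: (m!/(j!(m-j)!)) · L_{ρ,m+2}/(L_{ρ,j+4} L_{ρ,m-j+2}) ≤ C/(j+1). -/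
lemma keyN (j n : ℕ) (h : j ≤ n) :
    (j+n).factorial * (j+n+3)^10 * ((j+4).factorial)^2 * ((n+2).factorial)^2 * (j+1)
      ≤ 2^10 * (j.factorial * n.factorial * ((j+n+2).factorial)^2 * (j+5)^10 * (n+3)^10) := by
  have e1 : (j+4).factorial = ((j+1)*(j+2)*(j+3)*(j+4)) * j.factorial := by
    simp [Nat.factorial_succ]; ring
  have e2 : (n+2).factorial = ((n+1)*(n+2)) * n.factorial := by
    simp [Nat.factorial_succ]; ring
  have e3 : (j+n+2).factorial = ((j+n+1)*(j+n+2)) * (j+n).factorial := by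
    simp [Nat.factorial_succ]; ring
  rw [e1, e2, e3]
  have I1 : (j+n+3)^10 ≤ 2^10 * (n+3)^10 := by
    calc (j+n+3)^10 ≤ (2*(n+3))^10 := by gcongr <;> omega
    _ = 2^10 * (n+3)^10 := by ring
  have I2 : ((j+1)*(j+2)*(j+3)*(j+4))^2 * (j+1) ≤ (j+5)^10 := by
    calc ((j+1)*(j+2)*(j+3)*(j+4))^2 * (j+1)
        ≤ ((j+5)*(j+5)*(j+5)*(j+5))^2 * (j+5) := by gcongr <;> omega
    _ = (j+5)^9 := by ring
    _ ≤ (j+5)^10 := Nat.pow_le_pow_right (by omega) (by omega)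
  have I3 : j.factorial * n.factorial * ((n+1)*(n+2))^2
      ≤ (j+n).factorial * ((j+n+1)*(j+n+2))^2 := by
    have hf : j.factorial * n.factorial ≤ (j+n).factorial :=
      Nat.le_of_dvd (Nat.factorial_pos _) (Nat.factorial_mul_factorial_dvd_factorial_add j n)
    have hq : (n+1)*(n+2) ≤ (j+n+1)*(j+n+2) := by
      apply Nat.mul_le_mul <;> omega
    exact Nat.mul_le_mul hf (Nat.pow_le_pow_left hq 2)
  calc (j+n).factorial * (j+n+3)^10 * (((j+1)*(j+2)*(j+3)*(j+4)) * j.factorial)^2 *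
        (((n+1)*(n+2)) * n.factorial)^2 * (j+1)
      = ((j+n+3)^10) * (((j+1)*(j+2)*(j+3)*(j+4))^2 * (j+1)) *
        (j.factorial * n.factorial * ((n+1)*(n+2))^2) *
        (j.factorial * n.factorial * (j+n).factorial) := by ring
    _ ≤ (2^10 * (n+3)^10) * ((j+5)^10) *
        ((j+n).factorial * ((j+n+1)*(j+n+2))^2) *
        (j.factorial * n.factorial * (j+n).factorial) :=
      Nat.mul_le_mul (Nat.mul_le_mul (Nat.mul_le_mul I1 I2) I3) le_rfl
    _ = 2^10 * (j.factorial * n.factorial * (((j+n+1)*(j+n+2)) * (j+n).factorial)^2 *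
        (j+5)^10 * (n+3)^10) := by ring

/-- Combinatorial weight estimate, low-frequency range 0 ≤ j ≤ ⌊m/2⌋. -/
theorem weight_estimate_low' (ρ₀ : ℝ) (h0 : 0 < ρ₀) (h1 : ρ₀ ≤ 1) :
    ∃ C > 0, ∀ ρ : ℝ, ρ₀ / 2 ≤ ρ → ρ ≤ ρ₀ → ∀ m j : ℕ, j ≤ m / 2 →
      ((Nat.factorial m : ℝ) / ((Nat.factorial j : ℝ) * (Nat.factorial (m - j) : ℝ))) *
          Lw ρ (m + 2) / (Lw ρ (j + 4) * Lw ρ (m - j + 2)) ≤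
        C / ((j : ℝ) + 1) := by
  refine ⟨2^10 * (2/ρ₀)^5, by positivity, ?_⟩
  intro ρ hρl hρr m j hj
  have hρ : 0 < ρ := lt_of_lt_of_le (by linarith) hρl
  obtain ⟨n, hjn, rfl⟩ : ∃ n, j ≤ n ∧ m = j + n := ⟨m - j, by omega, by omega⟩
  rw [show j + n - j = n by omega]
  have hfj : (0:ℝ) < j.factorial := by exact_mod_cast Nat.factorial_pos j
  have hfn : (0:ℝ) < n.factorial := by exact_mod_cast Nat.factorial_pos n
  have hf2 : (0:ℝ) < (j+n+2).factorial := by exact_mod_cast Nat.factorial_pos _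
  have hf3 : (0:ℝ) < (j+4).factorial := by exact_mod_cast Nat.factorial_pos _
  have hf4 : (0:ℝ) < (n+2).factorial := by exact_mod_cast Nat.factorial_pos _
  have heq : ((Nat.factorial (j+n) : ℝ) / ((Nat.factorial j : ℝ) * (Nat.factorial n : ℝ))) *
          Lw ρ (j + n + 2) / (Lw ρ (j + 4) * Lw ρ (n + 2)) =
      (((j+n).factorial * ((j:ℝ)+(n:ℝ)+3)^10 * ((j+4).factorial:ℝ)^2 * ((n+2).factorial:ℝ)^2) /
        ((j.factorial:ℝ) * n.factorial * ((j+n+2).factorial:ℝ)^2 * ((j:ℝ)+5)^10 * ((n:ℝ)+3)^10)) *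
        (ρ^5)⁻¹ := by
    simp only [Lw]
    push_cast
    field_simp
    ring
  rw [heq]
  have hA : (((j+n).factorial * ((j:ℝ)+(n:ℝ)+3)^10 * ((j+4).factorial:ℝ)^2 * ((n+2).factorial:ℝ)^2) /
        ((j.factorial:ℝ) * n.factorial * ((j+n+2).factorial:ℝ)^2 * ((j:ℝ)+5)^10 * ((n:ℝ)+3)^10))
      ≤ 2^10 / ((j:ℝ)+1) := by
    rw [div_le_div_iff₀ (by positivity) (by positivity)]
    have := keyN j n hjn
    have : ((j+n).factorial * (j+n+3)^10 * ((j+4).factorial)^2 * ((n+2).factorial)^2 * (j+1) : ℝ)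
        ≤ 2^10 * (j.factorial * n.factorial * ((j+n+2).factorial)^2 * (j+5)^10 * (n+3)^10) := by
      exact_mod_cast this
    push_cast at this ⊢
    linarith
  have hB : (ρ^5)⁻¹ ≤ (2/ρ₀)^5 := by
    have h1 : (0:ℝ) < (ρ₀/2)^5 := by positivity
    have h2 : (ρ₀/2)^5 ≤ ρ^5 := by gcongr
    calc (ρ^5)⁻¹ ≤ ((ρ₀/2)^5)⁻¹ := by
          apply inv_anti₀ h1 h2
      _ = (2/ρ₀)^5 := by rw [← inv_pow, inv_div]
  calc _ ≤ (2^10 / ((j:ℝ)+1)) * (2/ρ₀)^5 := by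
        apply mul_le_mul hA hB (by positivity) (by positivity)
    _ = 2^10 * (2/ρ₀)^5 / ((j:ℝ)+1) := by ring
end

section
/- Let L_{ρ,m} = ρ^{m+1}(m+1)^{10}/(m!)^2 with ρ₀/2 ≤ ρ ≤ ρ₀ ≤ 1. There exists C > 0 depending only on ρ₀ such that for all integers m ≥ 0 and ⌊m/2⌋ + 1 ≤ j ≤ m: (m!/(j!(m-j)!)) · L_{ρ,m+2}/(L_{ρ,j+2} L_{ρ,m-j+4}) ≤ C/(m-j+1). -/
lemma nat_key (j k : ℕ) (hk : k ≤ j) :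
    Nat.factorial (j+k) * (Nat.factorial (j+2))^2 * (Nat.factorial (k+4))^2 *
      (j+k+3)^10 * (k+1)
    ≤ 2^10 * (Nat.factorial j * Nat.factorial k * (Nat.factorial (j+k+2))^2 *
      (j+3)^10 * (k+5)^10) := by
  have hab : Nat.factorial j * Nat.factorial k ≤ Nat.factorial (j+k) :=
    Nat.le_of_dvd (Nat.factorial_pos _) (Nat.factorial_mul_factorial_dvd_factorial_add j k)
  set a := Nat.factorial j with ha
  set b := Nat.factorial k with hb
  set c := Nat.factorial (j+k) with hc
  have e1 : Nat.factorial (j+2) = (j+2) * ((j+1) * a) := by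
    simp [Nat.factorial_succ, ha]
  have e2 : Nat.factorial (k+4) = (k+4) * ((k+3) * ((k+2) * ((k+1) * b))) := by
    simp [Nat.factorial_succ, hb]
  have e3 : Nat.factorial (j+k+2) = (j+k+2) * ((j+k+1) * c) := by
    simp [Nat.factorial_succ, hc]
  rw [e1, e2, e3]
  have habc : a*a*b*b*c ≤ a*b*(c*c) := by
    calc a*a*b*b*c = (a*b)*(a*b*c) := by ring
    _ ≤ c*(a*b*c) := Nat.mul_le_mul_right _ hab
    _ = a*b*(c*c) := by ring
  have h4 : (k+1)*(k+2)*(k+3)*(k+4) ≤ (k+5)^4 := by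
    calc (k+1)*(k+2)*(k+3)*(k+4) ≤ (k+5)*(k+5)*(k+5)*(k+5) := by gcongr <;> omega
    _ = (k+5)^4 := by ring
  have hX : ((j+1)*(j+2))^2 * (((k+1)*(k+2)*(k+3)*(k+4))^2 * (k+1)) * (j+k+3)^10
      ≤ ((j+k+1)*(j+k+2))^2 * (k+5)^10 * (2*(j+3))^10 := by
    have hA : (j+1)*(j+2) ≤ (j+k+1)*(j+k+2) :=
      Nat.mul_le_mul (by omega) (by omega)
    have hB : ((k+1)*(k+2)*(k+3)*(k+4))^2 * (k+1) ≤ (k+5)^10 := by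
      calc ((k+1)*(k+2)*(k+3)*(k+4))^2 * (k+1)
          ≤ ((k+5)^4)^2 * (k+5)^2 := by
            refine Nat.mul_le_mul (Nat.pow_le_pow_left h4 2) ?_
            calc k+1 ≤ k+5 := by omega
            _ ≤ (k+5)^2 := Nat.le_self_pow (by norm_num) _
      _ = (k+5)^10 := by ring
    have hC : j+k+3 ≤ 2*(j+3) := by omega
    calc ((j+1)*(j+2))^2 * (((k+1)*(k+2)*(k+3)*(k+4))^2 * (k+1)) * (j+k+3)^10
        ≤ ((j+k+1)*(j+k+2))^2 * ((k+5)^10) * (2*(j+3))^10 :=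
          Nat.mul_le_mul (Nat.mul_le_mul (Nat.pow_le_pow_left hA 2) hB)
            (Nat.pow_le_pow_left hC 10)
    _ = ((j+k+1)*(j+k+2))^2 * (k+5)^10 * (2*(j+3))^10 := by ring
  calc c * ((j+2) * ((j+1) * a))^2 * ((k+4) * ((k+3) * ((k+2) * ((k+1) * b))))^2 *
      (j+k+3)^10 * (k+1)
      = (a*a*b*b*c) * (((j+1)*(j+2))^2 * (((k+1)*(k+2)*(k+3)*(k+4))^2 * (k+1)) *
        (j+k+3)^10) := by ring
    _ ≤ (a*b*(c*c)) * (((j+k+1)*(j+k+2))^2 * (k+5)^10 * (2*(j+3))^10) :=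
        Nat.mul_le_mul habc hX
    _ = 2^10 * (a * b * ((j+k+2) * ((j+k+1) * c))^2 * (j+3)^10 * (k+5)^10) := by ring

set_option maxHeartbeats 1000000 in
lemma real_key (ρ₀ ρ : ℝ) (h0 : 0 < ρ₀) (hl : ρ₀ / 2 ≤ ρ) (hu : ρ ≤ ρ₀)
    (j k : ℕ) (hk : k ≤ j) :
    ((Nat.factorial (j+k) : ℝ) / ((Nat.factorial j : ℝ) * (Nat.factorial k : ℝ))) *
        Lw ρ (j + k + 2) / (Lw ρ (j + 2) * Lw ρ (k + 4)) ≤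
      (2^15 / ρ₀^5) / ((k : ℝ) + 1) := by
  have hρ : 0 < ρ := by linarith
  have fj : (0:ℝ) < (Nat.factorial j : ℝ) := by exact_mod_cast Nat.factorial_pos j
  have fk : (0:ℝ) < (Nat.factorial k : ℝ) := by exact_mod_cast Nat.factorial_pos k
  have fjk : (0:ℝ) < (Nat.factorial (j+k) : ℝ) := by exact_mod_cast Nat.factorial_pos (j+k)
  have fj2 : (0:ℝ) < (Nat.factorial (j+2) : ℝ) := by exact_mod_cast Nat.factorial_pos (j+2)
  have fk4 : (0:ℝ) < (Nat.factorial (k+4) : ℝ) := by exact_mod_cast Nat.factorial_pos (k+4)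
  have fjk2 : (0:ℝ) < (Nat.factorial (j+k+2) : ℝ) := by exact_mod_cast Nat.factorial_pos (j+k+2)
  set Q : ℝ := ((Nat.factorial (j+k) : ℝ) * ((Nat.factorial (j+2) : ℝ))^2 *
      ((Nat.factorial (k+4) : ℝ))^2 * (((j+k+2 : ℕ) : ℝ)+1)^10) /
      ((2:ℝ)^10 * ((Nat.factorial j : ℝ) * (Nat.factorial k : ℝ) *
      ((Nat.factorial (j+k+2) : ℝ))^2 * (((j+2 : ℕ) : ℝ)+1)^10 * (((k+4 : ℕ) : ℝ)+1)^10))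
      with hQdef
  have hE : ((Nat.factorial (j+k) : ℝ) / ((Nat.factorial j : ℝ) * (Nat.factorial k : ℝ))) *
      Lw ρ (j + k + 2) / (Lw ρ (j + 2) * Lw ρ (k + 4)) = (2^10 / ρ^5) * Q := by
    rw [hQdef]
    simp only [Lw]
    set A : ℝ := (((j+k+2 : ℕ) : ℝ)+1)^10 with hA
    set B : ℝ := (((j+2 : ℕ) : ℝ)+1)^10 with hB
    set C : ℝ := (((k+4 : ℕ) : ℝ)+1)^10 with hC
    have hB0 : B ≠ 0 := by rw [hB]; positivity
    have hC0 : C ≠ 0 := by rw [hC]; positivity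
    field_simp
    ring
  have hQ : Q ≤ 1 / ((k:ℝ)+1) := by
    rw [hQdef, div_le_div_iff₀ (by positivity) (by positivity), one_mul]
    have h2 : Nat.factorial (j+k) * (Nat.factorial (j+2))^2 * (Nat.factorial (k+4))^2 *
        ((j+k+2)+1)^10 * (k+1)
        ≤ 2^10 * (Nat.factorial j * Nat.factorial k * (Nat.factorial (j+k+2))^2 *
        ((j+2)+1)^10 * ((k+4)+1)^10) := nat_key j k hk
    exact_mod_cast h2
  have hQ0 : 0 ≤ Q := by rw [hQdef]; positivity
  have hpow : (2:ℝ)^10 / ρ^5 ≤ 2^15 / ρ₀^5 := by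
    rw [div_le_div_iff₀ (by positivity) (by positivity)]
    have h2ρ : ρ₀ ≤ 2 * ρ := by linarith
    have : ρ₀^5 ≤ (2*ρ)^5 := pow_le_pow_left₀ h0.le h2ρ 5
    nlinarith [pow_pos hρ 5, pow_pos h0 5]
  calc ((Nat.factorial (j+k) : ℝ) / ((Nat.factorial j : ℝ) * (Nat.factorial k : ℝ))) *
      Lw ρ (j + k + 2) / (Lw ρ (j + 2) * Lw ρ (k + 4)) = (2^10 / ρ^5) * Q := hE
    _ ≤ (2^10 / ρ^5) * (1 / ((k:ℝ)+1)) :=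
        mul_le_mul_of_nonneg_left hQ (by positivity)
    _ ≤ (2^15 / ρ₀^5) * (1 / ((k:ℝ)+1)) :=
        mul_le_mul_of_nonneg_right hpow (by positivity)
    _ = (2^15 / ρ₀^5) / ((k:ℝ)+1) := by ring

/-- Combinatorial weight estimate, high-frequency range ⌊m/2⌋+1 ≤ j ≤ m. -/
theorem weight_estimate_high' (ρ₀ : ℝ) (h0 : 0 < ρ₀) (h1 : ρ₀ ≤ 1) :
    ∃ C > 0, ∀ ρ : ℝ, ρ₀ / 2 ≤ ρ → ρ ≤ ρ₀ → ∀ m j : ℕ, m / 2 + 1 ≤ j → j ≤ m →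
      ((Nat.factorial m : ℝ) / ((Nat.factorial j : ℝ) * (Nat.factorial (m - j) : ℝ))) *
          Lw ρ (m + 2) / (Lw ρ (j + 2) * Lw ρ (m - j + 4)) ≤
        C / ((m : ℝ) - (j : ℝ) + 1) := by
  refine ⟨2^15 / ρ₀^5, by positivity, ?_⟩
  intro ρ hl hu m j hj1 hj2
  obtain ⟨k, rfl⟩ : ∃ k, m = j + k := ⟨m - j, by omega⟩
  have hk : k ≤ j := by omega
  have hsub : j + k - j = k := by omega
  rw [hsub]
  have hcast : ((j + k : ℕ) : ℝ) - (j : ℝ) + 1 = (k : ℝ) + 1 := by push_cast; ring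
  rw [hcast]
  exact real_key ρ₀ ρ h0 hl hu j k hk
end

section
/- Let L_{ρ,m} = ρ^{m+1}(m+1)^{10}/(m!)^2 with ρ₀/2 ≤ ρ ≤ ρ₀ ≤ 1. There exists C > 0 depending only on ρ₀ such that for all m ≥ 0 and 0 ≤ j ≤ ⌊m/2⌋: (m!/(j!(m-j)!)) · (ρ²/((m-j+4)^{3/2}(m+1)^{1/2})) · L_{ρ,m+2}/(L_{ρ,j+4} L_{ρ,m-j+3}) ≤ C/(j+1). -/
/-- Pure algebra rearrangement used in `weight_estimate_gain`, with the large powers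
and the fractional powers abstracted as atoms. -/
theorem weight_alg (j n : ℕ) (ρ a b X Y Z fj fn fm J N : ℝ)
    (hρ : ρ ≠ 0) (ha : a ≠ 0) (hb : b ≠ 0)
    (hfj : fj ≠ 0) (hfn : fn ≠ 0) (hfm : fm ≠ 0)
    (hM1 : J + N + 1 ≠ 0) (hM2 : J + N + 2 ≠ 0)
    (h1 : J + 1 ≠ 0) (h2 : J + 2 ≠ 0) (h3 : J + 3 ≠ 0) (h4 : J + 4 ≠ 0)
    (k1 : N + 1 ≠ 0) (k2 : N + 2 ≠ 0) (k3 : N + 3 ≠ 0)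
    (hX : X ≠ 0) (hY : Y ≠ 0) :
    fm / (fj * fn) * (ρ ^ 2 / (a * b)) *
        (ρ ^ (j + n + 2 + 1) * Z / ((J + N + 2) * (J + N + 1) * fm) ^ 2) /
        (ρ ^ (j + 4 + 1) * X / ((J + 4) * (J + 3) * (J + 2) * (J + 1) * fj) ^ 2 *
          (ρ ^ (n + 3 + 1) * Y / ((N + 3) * (N + 2) * (N + 1) * fn) ^ 2)) =
      (fj * fn / fm) * (((J + 1) * (J + 2) * (J + 3) * (J + 4)) ^ 2 / X) * (1 / ρ ^ 4) *
        ((N + 1) ^ 2 * (N + 2) ^ 2 * (N + 3) ^ 2 * Z /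
          (Y * ((J + N + 1) ^ 2 * (J + N + 2) ^ 2) * (a * b))) := by
  field_simp
  ring

set_option maxHeartbeats 1000000 in
/-- Combinatorial weight estimate with gain of derivatives, low-frequency range. -/
theorem weight_estimate_gain (ρ₀ : ℝ) (h0 : 0 < ρ₀) (h1 : ρ₀ ≤ 1) :
    ∃ C > 0, ∀ ρ : ℝ, ρ₀ / 2 ≤ ρ → ρ ≤ ρ₀ → ∀ m j : ℕ, j ≤ m / 2 →
      ((Nat.factorial m : ℝ) / ((Nat.factorial j : ℝ) * (Nat.factorial (m - j) : ℝ))) *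
          (ρ ^ 2 / (((m : ℝ) - (j : ℝ) + 4) ^ ((3 : ℝ) / 2) * ((m : ℝ) + 1) ^ ((1 : ℝ) / 2))) *
          Lw ρ (m + 2) / (Lw ρ (j + 4) * Lw ρ (m - j + 3)) ≤
        C / ((j : ℝ) + 1) := by
  refine ⟨1769472 / ρ₀ ^ 4, by positivity, ?_⟩
  intro ρ hρ1 hρ2 m j hj
  have hρ : 0 < ρ := lt_of_lt_of_le (by positivity) hρ1
  obtain ⟨n, rfl⟩ : ∃ n, m = j + n := ⟨m - j, by omega⟩
  have hjn : j ≤ n := by omega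
  rw [show j + n - j = n from by omega]
  have hJN : (j : ℝ) ≤ (n : ℝ) := Nat.cast_le.mpr hjn
  have hbase : ((j + n : ℕ) : ℝ) - (j : ℝ) + 4 = (n : ℝ) + 4 := by push_cast; ring
  have hbase2 : ((j + n : ℕ) : ℝ) + 1 = (j : ℝ) + (n : ℝ) + 1 := by push_cast; ring
  rw [hbase, hbase2]
  have hfj : ((Nat.factorial j : ℕ) : ℝ) ≠ 0 := by positivity
  have hfn : ((Nat.factorial n : ℕ) : ℝ) ≠ 0 := by positivity
  have hfm : ((Nat.factorial (j + n) : ℕ) : ℝ) ≠ 0 := by positivity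
  have hρ' : ρ ≠ 0 := ne_of_gt hρ
  have hapos : (0 : ℝ) < ((n : ℝ) + 4) ^ ((3 : ℝ) / 2) := Real.rpow_pos_of_pos (by positivity) _
  have hbpos : (0 : ℝ) < ((j : ℝ) + (n : ℝ) + 1) ^ ((1 : ℝ) / 2) :=
    Real.rpow_pos_of_pos (by positivity) _
  have e1 : ((Nat.factorial (j + 4) : ℕ) : ℝ) =
      ((j : ℝ) + 4) * ((j : ℝ) + 3) * ((j : ℝ) + 2) * ((j : ℝ) + 1) *
        ((Nat.factorial j : ℕ) : ℝ) := by
    rw [show j + 4 = j + 3 + 1 from rfl, Nat.factorial_succ,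
      show j + 3 = j + 2 + 1 from rfl, Nat.factorial_succ,
      show j + 2 = j + 1 + 1 from rfl, Nat.factorial_succ, Nat.factorial_succ]
    push_cast; ring
  have e2 : ((Nat.factorial (n + 3) : ℕ) : ℝ) =
      ((n : ℝ) + 3) * ((n : ℝ) + 2) * ((n : ℝ) + 1) * ((Nat.factorial n : ℕ) : ℝ) := by
    rw [show n + 3 = n + 2 + 1 from rfl, Nat.factorial_succ,
      show n + 2 = n + 1 + 1 from rfl, Nat.factorial_succ, Nat.factorial_succ]
    push_cast; ring
  have e3 : ((Nat.factorial (j + n + 2) : ℕ) : ℝ) =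
      ((j : ℝ) + (n : ℝ) + 2) * ((j : ℝ) + (n : ℝ) + 1) * ((Nat.factorial (j + n) : ℕ) : ℝ) := by
    rw [show j + n + 2 = j + n + 1 + 1 from rfl, Nat.factorial_succ, Nat.factorial_succ]
    push_cast; ring
  have Heq :
      ((Nat.factorial (j + n) : ℕ) : ℝ) /
            (((Nat.factorial j : ℕ) : ℝ) * ((Nat.factorial n : ℕ) : ℝ)) *
          (ρ ^ 2 / (((n : ℝ) + 4) ^ ((3 : ℝ) / 2) *
            ((j : ℝ) + (n : ℝ) + 1) ^ ((1 : ℝ) / 2))) *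
          Lw ρ (j + n + 2) / (Lw ρ (j + 4) * Lw ρ (n + 3)) =
        (((Nat.factorial j : ℕ) : ℝ) * ((Nat.factorial n : ℕ) : ℝ) /
            ((Nat.factorial (j + n) : ℕ) : ℝ)) *
          (((((j : ℝ) + 1) * ((j : ℝ) + 2) * ((j : ℝ) + 3) * ((j : ℝ) + 4)) ^ 2) /
            ((j : ℝ) + 5) ^ 10) *
          (1 / ρ ^ 4) *
          ((((n : ℝ) + 1) ^ 2 * ((n : ℝ) + 2) ^ 2 * ((n : ℝ) + 3) ^ 2 *
              ((j : ℝ) + (n : ℝ) + 3) ^ 10) /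
            (((n : ℝ) + 4) ^ 10 *
              (((j : ℝ) + (n : ℝ) + 1) ^ 2 * ((j : ℝ) + (n : ℝ) + 2) ^ 2) *
              (((n : ℝ) + 4) ^ ((3 : ℝ) / 2) *
                ((j : ℝ) + (n : ℝ) + 1) ^ ((1 : ℝ) / 2)))) := by
    simp only [Lw]
    push_cast
    rw [e1, e2, e3,
      show (j : ℝ) + 4 + 1 = (j : ℝ) + 5 by ring,
      show (n : ℝ) + 3 + 1 = (n : ℝ) + 4 by ring,
      show (j : ℝ) + (n : ℝ) + 2 + 1 = (j : ℝ) + (n : ℝ) + 3 by ring]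
    exact weight_alg j n ρ _ _ _ _ _ _ _ _ _ _ hρ' (ne_of_gt hapos) (ne_of_gt hbpos)
      hfj hfn hfm (by positivity) (by positivity) (by positivity) (by positivity)
      (by positivity) (by positivity) (by positivity) (by positivity) (by positivity)
      (by positivity) (by positivity)
  rw [Heq]
  have hF1 : ((Nat.factorial j : ℕ) : ℝ) * ((Nat.factorial n : ℕ) : ℝ) /
      ((Nat.factorial (j + n) : ℕ) : ℝ) ≤ 1 := by
    rw [div_le_one (by positivity)]
    have := Nat.le_of_dvd (Nat.factorial_pos (j + n))
      (Nat.factorial_mul_factorial_dvd_factorial_add j n)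
    exact_mod_cast this
  have hF2 : ((((j : ℝ) + 1) * ((j : ℝ) + 2) * ((j : ℝ) + 3) * ((j : ℝ) + 4)) ^ 2) /
      ((j : ℝ) + 5) ^ 10 ≤ 1 / ((j : ℝ) + 1) := by
    rw [div_le_div_iff₀ (by positivity) (by positivity)]
    have hJ0 : (0 : ℝ) ≤ (j : ℝ) := Nat.cast_nonneg j
    have h : ((j : ℝ) + 1) * ((j : ℝ) + 2) * ((j : ℝ) + 3) * ((j : ℝ) + 4) ≤
        ((j : ℝ) + 5) ^ 4 := by nlinarith [pow_nonneg hJ0 3, sq_nonneg (j : ℝ), hJ0]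
    calc (((j : ℝ) + 1) * ((j : ℝ) + 2) * ((j : ℝ) + 3) * ((j : ℝ) + 4)) ^ 2 * ((j : ℝ) + 1)
        ≤ (((j : ℝ) + 5) ^ 4) ^ 2 * ((j : ℝ) + 5) := by
          refine mul_le_mul ?_ (by linarith) (by positivity) (by positivity)
          exact pow_le_pow_left₀ (by positivity) h 2
      _ = ((j : ℝ) + 5) ^ 9 := by ring
      _ ≤ ((j : ℝ) + 5) ^ 10 := by
          apply pow_le_pow_right₀ (by linarith)
          norm_num
      _ = 1 * ((j : ℝ) + 5) ^ 10 := by ring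
  have hF3 : 1 / ρ ^ 4 ≤ 16 / ρ₀ ^ 4 := by
    rw [div_le_div_iff₀ (by positivity) (by positivity)]
    have : ρ₀ ^ 4 ≤ (2 * ρ) ^ 4 := by
      apply pow_le_pow_left₀ h0.le
      linarith
    calc (1 : ℝ) * ρ₀ ^ 4 = ρ₀ ^ 4 := by ring
      _ ≤ (2 * ρ) ^ 4 := this
      _ = 16 * ρ ^ 4 := by ring
  have hsx : (n : ℝ) + 1 ≤ Real.sqrt (((n : ℝ) + 4) * ((j : ℝ) + (n : ℝ) + 1)) := by
    calc (n : ℝ) + 1 = Real.sqrt (((n : ℝ) + 1) ^ 2) := (Real.sqrt_sq (by positivity)).symm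
      _ ≤ Real.sqrt (((n : ℝ) + 4) * ((j : ℝ) + (n : ℝ) + 1)) := by
          apply Real.sqrt_le_sqrt
          have hj0 : (0:ℝ) ≤ (j:ℝ) := Nat.cast_nonneg j
          have hn0 : (0:ℝ) ≤ (n:ℝ) := Nat.cast_nonneg n
          nlinarith [mul_nonneg hj0 hn0]
  have hab : ((n : ℝ) + 4) * ((n : ℝ) + 1) ≤
      ((n : ℝ) + 4) ^ ((3 : ℝ) / 2) * ((j : ℝ) + (n : ℝ) + 1) ^ ((1 : ℝ) / 2) := by
    have h32 : ((n : ℝ) + 4) ^ ((3 : ℝ) / 2) = ((n : ℝ) + 4) * Real.sqrt ((n : ℝ) + 4) := by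
      rw [show (3 : ℝ) / 2 = 1 + 1 / 2 by norm_num, Real.rpow_add (by positivity),
        Real.rpow_one, Real.sqrt_eq_rpow]
    have h12 : ((j : ℝ) + (n : ℝ) + 1) ^ ((1 : ℝ) / 2) =
        Real.sqrt ((j : ℝ) + (n : ℝ) + 1) := (Real.sqrt_eq_rpow _).symm
    rw [h32, h12, mul_assoc, ← Real.sqrt_mul (by positivity)]
    exact mul_le_mul_of_nonneg_left hsx (by positivity)
  have hF4 : (((n : ℝ) + 1) ^ 2 * ((n : ℝ) + 2) ^ 2 * ((n : ℝ) + 3) ^ 2 *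
        ((j : ℝ) + (n : ℝ) + 3) ^ 10) /
      (((n : ℝ) + 4) ^ 10 *
        (((j : ℝ) + (n : ℝ) + 1) ^ 2 * ((j : ℝ) + (n : ℝ) + 2) ^ 2) *
        (((n : ℝ) + 4) ^ ((3 : ℝ) / 2) * ((j : ℝ) + (n : ℝ) + 1) ^ ((1 : ℝ) / 2))) ≤
      110592 := by
    rw [div_le_iff₀ (by positivity)]
    have hN0 : (0 : ℝ) ≤ (n : ℝ) := Nat.cast_nonneg n
    have hJ0 : (0 : ℝ) ≤ (j : ℝ) := Nat.cast_nonneg j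
    have key : ((n : ℝ) + 3) ^ 2 ≤ 108 * (((n : ℝ) + 4) * ((n : ℝ) + 1)) := by nlinarith
    calc ((n : ℝ) + 1) ^ 2 * ((n : ℝ) + 2) ^ 2 * ((n : ℝ) + 3) ^ 2 *
          ((j : ℝ) + (n : ℝ) + 3) ^ 10
        ≤ ((n : ℝ) + 1) ^ 2 * ((n : ℝ) + 2) ^ 2 * ((n : ℝ) + 3) ^ 2 *
          (2 * ((n : ℝ) + 4)) ^ 10 := by
          gcongr
          linarith
      _ = (1024 * ((n : ℝ) + 4) ^ 10 * ((n : ℝ) + 1) ^ 2 * ((n : ℝ) + 2) ^ 2) *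
          ((n : ℝ) + 3) ^ 2 := by ring
      _ ≤ (1024 * ((n : ℝ) + 4) ^ 10 * ((n : ℝ) + 1) ^ 2 * ((n : ℝ) + 2) ^ 2) *
          (108 * (((n : ℝ) + 4) * ((n : ℝ) + 1))) :=
          mul_le_mul_of_nonneg_left key (by positivity)
      _ = 110592 * (((n : ℝ) + 4) ^ 10 * (((n : ℝ) + 1) ^ 2 * ((n : ℝ) + 2) ^ 2) *
          (((n : ℝ) + 4) * ((n : ℝ) + 1))) := by ring
      _ ≤ 110592 * (((n : ℝ) + 4) ^ 10 *
          (((j : ℝ) + (n : ℝ) + 1) ^ 2 * ((j : ℝ) + (n : ℝ) + 2) ^ 2) *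
          (((n : ℝ) + 4) ^ ((3 : ℝ) / 2) * ((j : ℝ) + (n : ℝ) + 1) ^ ((1 : ℝ) / 2))) := by
          gcongr <;> linarith
  calc (((Nat.factorial j : ℕ) : ℝ) * ((Nat.factorial n : ℕ) : ℝ) /
          ((Nat.factorial (j + n) : ℕ) : ℝ)) *
        (((((j : ℝ) + 1) * ((j : ℝ) + 2) * ((j : ℝ) + 3) * ((j : ℝ) + 4)) ^ 2) /
          ((j : ℝ) + 5) ^ 10) *
        (1 / ρ ^ 4) *
        ((((n : ℝ) + 1) ^ 2 * ((n : ℝ) + 2) ^ 2 * ((n : ℝ) + 3) ^ 2 *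
            ((j : ℝ) + (n : ℝ) + 3) ^ 10) /
          (((n : ℝ) + 4) ^ 10 *
            (((j : ℝ) + (n : ℝ) + 1) ^ 2 * ((j : ℝ) + (n : ℝ) + 2) ^ 2) *
            (((n : ℝ) + 4) ^ ((3 : ℝ) / 2) * ((j : ℝ) + (n : ℝ) + 1) ^ ((1 : ℝ) / 2))))
      ≤ 1 * (1 / ((j : ℝ) + 1)) * (16 / ρ₀ ^ 4) * 110592 := by
        refine mul_le_mul (mul_le_mul (mul_le_mul hF1 hF2 (by positivity) (by norm_num))
          hF3 (by positivity) (by positivity)) hF4 (by positivity) (by positivity)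
    _ = 1769472 / ρ₀ ^ 4 / ((j : ℝ) + 1) := by
        field_simp
        ring
end
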